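/- Let i, k, r, s be positive integers, l ≥ 0 an integer, and n ≥ max{i,k}·l - 1 an integer. Then F^i_{r,s}(k,n) = ∑_{j=0}^{l} r^{l-j} · s^j · C(l,j) · F^i_{r,s}(k, n - jk - (l-j)i), where C(l,j) denotes the binomial coefficient. -/
import Mathlib


/-- Auxiliary sequence: `genFibAux i k r s m` equals `F^i_{r,s}(k, m-1)`, i.e. the
four-parameters sequence indexed by `m = n + 1 ≥ 0`.  For `i ≤ k` the initial values
(`-1 ≤ n ≤ k-2`, i.e. `m < k`) are `r^⌊(n+1)/i⌋`, for `k < i` (`m < i`) they are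
`s^⌊(n+1)/k⌋`, and for `n ≥ max{k,i} - 1` the recurrence
`F(n) = r·F(n-i) + s·F(n-k)` holds. -/
def genFibAux (i k r s : ℕ) : ℕ → ℤ
  | m =>
    if m < max (max k i) 1 then
      if i ≤ k then (r : ℤ) ^ (m / i) else (s : ℤ) ^ (m / k)
    else
      r * genFibAux i k r s (m - max i 1) + s * genFibAux i k r s (m - max k 1)
  termination_by m => m
  decreasing_by all_goals omega

/-- The four-parameters sequence `F^i_{r,s}(k,n)` for integer `n ≥ -1`, with the
convention that it vanishes for `n ≤ -2`. -/
def genFib (i k r s : ℕ) (n : ℤ) : ℤ :=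
  if n < -1 then 0 else genFibAux i k r s (n + 1).toNat

lemma genFib_rec (i k r s : ℕ) (hi : 0 < i) (hk : 0 < k) (n : ℤ)
    (hn : ((max i k : ℕ) : ℤ) - 1 ≤ n) :
    genFib i k r s n = r * genFib i k r s (n - i) + s * genFib i k r s (n - k) := by
  have hn0 : ¬ n < -1 := by omega
  have hni : ¬ (n - i) < -1 := by omega
  have hnk : ¬ (n - k) < -1 := by omega
  rw [genFib, genFib, genFib, if_neg hn0, if_neg hni, if_neg hnk]
  rw [genFibAux]
  have hm : ¬ (n + 1).toNat < max (max k i) 1 := by omega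
  rw [if_neg hm]
  have e1 : (n + 1).toNat - max i 1 = (n - i + 1).toNat := by omega
  have e2 : (n + 1).toNat - max k 1 = (n - k + 1).toNat := by omega
  rw [e1, e2]

lemma pascal_sum (r s : ℤ) (l : ℕ) (A : ℕ → ℤ) :
    ∑ j ∈ Finset.range (l + 2), r ^ (l + 1 - j) * s ^ j * (Nat.choose (l+1) j : ℤ) * A j
      = r * ∑ j ∈ Finset.range (l + 1), r ^ (l - j) * s ^ j * (Nat.choose l j : ℤ) * A j
      + s * ∑ j ∈ Finset.range (l + 1), r ^ (l - j) * s ^ j * (Nat.choose l j : ℤ) * A (j+1) := by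
  rw [Finset.sum_range_succ' _ (l+1)]
  have step : ∀ j ∈ Finset.range (l+1),
      r ^ (l + 1 - (j+1)) * s ^ (j+1) * (Nat.choose (l+1) (j+1) : ℤ) * A (j+1)
      = s * (r ^ (l - j) * s ^ j * (Nat.choose l j : ℤ) * A (j+1))
        + r ^ (l + 1 - (j+1)) * s ^ (j+1) * (Nat.choose l (j+1) : ℤ) * A (j+1) := by
    intro j hj
    rw [Nat.succ_sub_succ, Nat.choose_succ_succ]
    push_cast
    ring
  rw [Finset.sum_congr rfl step, Finset.sum_add_distrib, ← Finset.mul_sum]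
  have e0 : r ^ (l + 1 - 0) * s ^ 0 * (Nat.choose (l+1) 0 : ℤ) * A 0
      = r ^ (l + 1 - 0) * s ^ 0 * (Nat.choose l 0 : ℤ) * A 0 := by norm_num
  have key : (∑ j ∈ Finset.range (l+1),
        r ^ (l + 1 - (j+1)) * s ^ (j+1) * (Nat.choose l (j+1) : ℤ) * A (j+1))
      + r ^ (l + 1 - 0) * s ^ 0 * (Nat.choose (l+1) 0 : ℤ) * A 0
      = ∑ j ∈ Finset.range (l+2), r ^ (l + 1 - j) * s ^ j * (Nat.choose l j : ℤ) * A j := by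
    rw [e0, ← Finset.sum_range_succ'
      (fun j => r ^ (l + 1 - j) * s ^ j * (Nat.choose l j : ℤ) * A j) (l+1)]
  have last : ∑ j ∈ Finset.range (l+2), r ^ (l + 1 - j) * s ^ j * (Nat.choose l j : ℤ) * A j
      = r * ∑ j ∈ Finset.range (l + 1), r ^ (l - j) * s ^ j * (Nat.choose l j : ℤ) * A j := by
    rw [Finset.sum_range_succ, Nat.choose_eq_zero_of_lt (by omega), Finset.mul_sum]
    simp only [Nat.cast_zero, mul_zero, zero_mul, add_zero]
    apply Finset.sum_congr rfl
    intro j hj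
    rw [Finset.mem_range] at hj
    rw [show l + 1 - j = (l - j) + 1 from by omega, pow_succ]
    ring
  rw [add_assoc, key, last]
  ring

/-- For positive integers `i, k, r, s`, integer `l ≥ 0` and integer
`n ≥ max{i,k}·l - 1`,
`F^i_{r,s}(k,n) = ∑_{j=0}^{l} r^{l-j} · s^j · C(l,j) · F^i_{r,s}(k, n - jk - (l-j)i)`. -/
theorem genFib_binomial_expansion (i k r s : ℕ) (hi : 0 < i) (hk : 0 < k)
    (hr : 0 < r) (hs : 0 < s) (l : ℕ) (n : ℤ)
    (hn : ((max i k : ℕ) : ℤ) * l - 1 ≤ n) :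
    genFib i k r s n =
      ∑ j ∈ Finset.range (l + 1),
        (r : ℤ) ^ (l - j) * (s : ℤ) ^ j * (Nat.choose l j : ℤ) *
          genFib i k r s (n - (j : ℤ) * k - ((l : ℤ) - j) * i) := by
  induction l generalizing n with
  | zero =>
    rw [Finset.sum_range_one]
    norm_num
  | succ l ih =>
    have hiM : (i:ℤ) ≤ ((max i k : ℕ) : ℤ) := by exact_mod_cast le_max_left i k
    have hkM : (k:ℤ) ≤ ((max i k : ℕ) : ℤ) := by exact_mod_cast le_max_right i k
    have hl0 : (0:ℤ) ≤ ((max i k : ℕ) : ℤ) * l := by positivity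
    simp only [Nat.cast_add, Nat.cast_one] at hn
    have expand : ((max i k : ℕ) : ℤ) * ((l:ℤ) + 1) = ((max i k : ℕ) : ℤ) * l + ((max i k : ℕ) : ℤ) := by
      ring
    have hrec := genFib_rec i k r s hi hk n (by linarith)
    have ihA := ih (n - i) (by linarith)
    have ihB := ih (n - k) (by linarith)
    have eA : genFib i k r s (n - i)
        = ∑ j ∈ Finset.range (l + 1), (r:ℤ) ^ (l - j) * (s:ℤ) ^ j * (Nat.choose l j : ℤ) *
            genFib i k r s (n - (j:ℤ) * k - ((l:ℤ) + 1 - j) * i) := by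
      rw [ihA]
      apply Finset.sum_congr rfl
      intro j hj
      have harg : n - (i:ℤ) - (j:ℤ) * k - ((l:ℤ) - j) * i
          = n - (j:ℤ) * k - ((l:ℤ) + 1 - j) * i := by ring
      rw [harg]
    have eB : genFib i k r s (n - k)
        = ∑ j ∈ Finset.range (l + 1), (r:ℤ) ^ (l - j) * (s:ℤ) ^ j * (Nat.choose l j : ℤ) *
            genFib i k r s (n - ((j:ℤ)+1) * k - ((l:ℤ) + 1 - ((j:ℤ)+1)) * i) := by
      rw [ihB]
      apply Finset.sum_congr rfl
      intro j hj
      have harg : n - (k:ℤ) - (j:ℤ) * k - ((l:ℤ) - j) * i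
          = n - ((j:ℤ)+1) * k - ((l:ℤ) + 1 - ((j:ℤ)+1)) * i := by ring
      rw [harg]
    calc genFib i k r s n
        = r * genFib i k r s (n - i) + s * genFib i k r s (n - k) := hrec
      _ = r * ∑ j ∈ Finset.range (l + 1), (r:ℤ) ^ (l - j) * (s:ℤ) ^ j * (Nat.choose l j : ℤ) *
              genFib i k r s (n - (j:ℤ) * k - ((l:ℤ) + 1 - j) * i)
          + s * ∑ j ∈ Finset.range (l + 1), (r:ℤ) ^ (l - j) * (s:ℤ) ^ j * (Nat.choose l j : ℤ) *
              genFib i k r s (n - ((j:ℤ)+1) * k - ((l:ℤ) + 1 - ((j:ℤ)+1)) * i) := by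
          rw [eA, eB]
      _ = ∑ j ∈ Finset.range (l + 2), (r:ℤ) ^ (l + 1 - j) * (s:ℤ) ^ j * (Nat.choose (l+1) j : ℤ) *
              genFib i k r s (n - (j:ℤ) * k - ((l:ℤ) + 1 - (j:ℤ)) * i) := by
          have := (pascal_sum (r:ℤ) (s:ℤ) l
            (fun j => genFib i k r s (n - (j:ℤ) * k - ((l:ℤ) + 1 - (j:ℤ)) * i))).symm
          simp only [Nat.cast_add, Nat.cast_one] at this ⊢
          convert this using 3 <;> push_cast <;> ring_nf
      _ = _ := by
          apply Finset.sum_congr rfl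
          intro j hj
          have harg : n - (j:ℤ) * k - ((l:ℤ) + 1 - (j:ℤ)) * i
              = n - (j:ℤ) * k - (((l+1:ℕ):ℤ) - j) * i := by push_cast; ring
          rw [harg]
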